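/- Let K, d be natural numbers, w : Fin K → ℝ nonnegative weights, v : Fin K → EuclideanSpace ℝ (Fin d), and let q(u) = ∑_k w k * ⟪v k, u⟫². Suppose there exist constants 0 < λ ≤ Λ such that λ‖u‖² ≤ q(u) ≤ Λ‖u‖² for all u. Let S ⊆ EuclideanSpace ℝ (Fin d), b₀ ∈ S, b̃ arbitrary, and suppose b̂ ∈ S satisfies q(b̂ - b̃) ≤ q(b - b̃) for all b ∈ S. Then ‖b̂ - b₀‖ ≤ 2 √(Λ/λ) ‖b̃ - b₀‖. -/
import Mathlib

open scoped RealInnerProductSpace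

/-- Euclidean-norm transfer of the projection bound: if the Gram quadratic form is
equivalent to the squared Euclidean norm with constants `lam ≤ Lam`, then the
constrained estimator's Euclidean error is at most `2 √(Lam/lam)` times the
unconstrained estimator's error. -/
theorem shape_constrained_projection_euclidean_bound
    (K d : ℕ) (w : Fin K → ℝ) (hw : ∀ k, 0 ≤ w k)
    (v : Fin K → EuclideanSpace ℝ (Fin d))
    (q : EuclideanSpace ℝ (Fin d) → ℝ)
    (hq : ∀ u, q u = ∑ k, w k * ⟪v k, u⟫ ^ 2)
    (lam Lam : ℝ) (hlam : 0 < lam) (hlamLam : lam ≤ Lam)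
    (hlow : ∀ u : EuclideanSpace ℝ (Fin d), lam * ‖u‖ ^ 2 ≤ q u)
    (hup : ∀ u : EuclideanSpace ℝ (Fin d), q u ≤ Lam * ‖u‖ ^ 2)
    (S : Set (EuclideanSpace ℝ (Fin d)))
    (b₀ : EuclideanSpace ℝ (Fin d)) (hb₀ : b₀ ∈ S)
    (btilde : EuclideanSpace ℝ (Fin d))
    (bhat : EuclideanSpace ℝ (Fin d)) (hbhat : bhat ∈ S)
    (hmin : ∀ b ∈ S, q (bhat - btilde) ≤ q (b - btilde)) :
    ‖bhat - b₀‖ ≤ 2 * Real.sqrt (Lam / lam) * ‖btilde - b₀‖ := by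
  set r := Real.sqrt (Lam / lam) with hr
  have hratio : (1 : ℝ) ≤ Lam / lam := (one_le_div hlam).2 hlamLam
  have hr1 : (1 : ℝ) ≤ r := by
    rw [hr]
    nlinarith [Real.sq_sqrt (le_trans zero_le_one hratio),
      Real.sqrt_nonneg (Lam / lam)]
  have hnb : ‖b₀ - btilde‖ = ‖btilde - b₀‖ := by rw [norm_sub_rev]
  have key : lam * ‖bhat - btilde‖ ^ 2 ≤ Lam * ‖btilde - b₀‖ ^ 2 := by
    calc lam * ‖bhat - btilde‖ ^ 2 ≤ q (bhat - btilde) := hlow _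
      _ ≤ q (b₀ - btilde) := hmin b₀ hb₀
      _ ≤ Lam * ‖b₀ - btilde‖ ^ 2 := hup _
      _ = Lam * ‖btilde - b₀‖ ^ 2 := by rw [hnb]
  have h1 : ‖bhat - btilde‖ ≤ r * ‖btilde - b₀‖ := by
    have hrhs : 0 ≤ r * ‖btilde - b₀‖ :=
      mul_nonneg (le_trans zero_le_one hr1) (norm_nonneg _)
    have hsq : ‖bhat - btilde‖ ^ 2 ≤ (r * ‖btilde - b₀‖) ^ 2 := by
      have hr2 : r ^ 2 = Lam / lam := Real.sq_sqrt (le_trans zero_le_one hratio)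
      rw [mul_pow, hr2]
      rw [div_mul_eq_mul_div, le_div_iff₀ hlam]
      nlinarith [key]
    nlinarith [hsq, norm_nonneg (bhat - btilde), hrhs]
  calc ‖bhat - b₀‖ ≤ ‖bhat - btilde‖ + ‖btilde - b₀‖ := norm_sub_le_norm_sub_add_norm_sub _ _ _
    _ ≤ r * ‖btilde - b₀‖ + ‖btilde - b₀‖ := by linarith
    _ ≤ 2 * r * ‖btilde - b₀‖ := by nlinarith [norm_nonneg (btilde - b₀), hr1]
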